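/- arXiv:1212.3092 — 6 statements merged into one kernel-verified Lean document; each statement's English description precedes it below -/
import Mathlib

section
/- Let w(t)=∫₀^∞ e^{−st} f(s) ds with f non-negative and non-increasing, and suppose there exist δ∈(0,1) and a, s₀ > 0 such that w(λt) ≥ a λ^{−δ} w(t) for all λ ≤ 1 and t ≤ 1/s₀. Then there exists a constant c = c(w, a, s₀, δ) > 0 such that f(s) ≥ c s^{−1} w(s^{−1}) for all s ≥ s₀. -/
/-!
Split `w (1 / (K s))` at `s`. On `(0, s]` the kernel `exp (-u / (K s))` is at most
`e · exp (-u / s)`, so that part is at most `e · w (1 / s)`; on `(s, ∞)` monotonicity bounds `f`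
by `f s`, so that part is at most `K s f s`. The scaling hypothesis with `λ = 1 / K` gives
`a K^δ w (1 / s) ≤ w (1 / (K s))`, and once `K` is so large that `a K^δ ≥ 2e`, the head term is
absorbed and `(a K^δ / 2) w (1 / s) ≤ K s f s`.
-/

open MeasureTheory Set Filter Real

noncomputable def laplaceTransform (f : ℝ → ℝ) (t : ℝ) : ℝ :=
  ∫ u in Ioi (0 : ℝ), exp (-(u * t)) * f u

section

variable {f : ℝ → ℝ}

theorem laplaceTransform_nonneg (hf0 : ∀ u > 0, 0 ≤ f u) (t : ℝ) : 0 ≤ laplaceTransform f t :=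
  setIntegral_nonneg measurableSet_Ioi fun u hu => mul_nonneg (exp_pos _).le (hf0 u hu)

theorem setIntegral_Ioc_le_exp_one_mul_laplaceTransform (hf0 : ∀ u > 0, 0 ≤ f u) {s t : ℝ} (hs : 0 < s) (ht : 0 ≤ t)
    (hint_t : IntegrableOn (fun u => exp (-(u * t)) * f u) (Ioc 0 s))
    (hint_s : IntegrableOn (fun u => exp (-(u * s⁻¹)) * f u) (Ioi 0)) :
    ∫ u in Ioc 0 s, exp (-(u * t)) * f u ≤ exp 1 * laplaceTransform f s⁻¹ := by
  have hkernel : ∀ u ∈ Ioc 0 s, exp (-(u * t)) * f u ≤ exp 1 * (exp (-(u * s⁻¹)) * f u) := by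
    intro u hu
    rw [← mul_assoc, ← exp_add]
    refine mul_le_mul_of_nonneg_right (exp_le_exp.mpr ?_) (hf0 u hu.1)
    have : u * s⁻¹ ≤ 1 := by rw [← div_eq_mul_inv]; exact div_le_one_of_le₀ hu.2 hs.le
    nlinarith [mul_nonneg hu.1.le ht]
  have hrestrict : ∫ u in Ioc 0 s, exp (-(u * s⁻¹)) * f u ≤ laplaceTransform f s⁻¹ :=
    setIntegral_mono_set hint_s
      ((ae_restrict_iff' measurableSet_Ioi).mpr
        (.of_forall fun u hu => mul_nonneg (exp_pos _).le (hf0 u hu)))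
      Ioc_subset_Ioi_self.eventuallyLE
  calc ∫ u in Ioc 0 s, exp (-(u * t)) * f u
      ≤ ∫ u in Ioc 0 s, exp 1 * (exp (-(u * s⁻¹)) * f u) :=
        setIntegral_mono_on hint_t ((hint_s.mono_set Ioc_subset_Ioi_self).const_mul _)
          measurableSet_Ioc hkernel
    _ = exp 1 * ∫ u in Ioc 0 s, exp (-(u * s⁻¹)) * f u := integral_const_mul _ _
    _ ≤ exp 1 * laplaceTransform f s⁻¹ := by gcongr

theorem setIntegral_Ioi_exp_mul_le (hf0 : ∀ u > 0, 0 ≤ f u)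
    (hfmono : ∀ s t : ℝ, 0 < s → s ≤ t → f t ≤ f s) {s T : ℝ} (hs : 0 < s) (hT : 0 < T)
    (hint : IntegrableOn (fun u => exp (-(u * T⁻¹)) * f u) (Ioi s)) :
    ∫ u in Ioi s, exp (-(u * T⁻¹)) * f u ≤ T * f s := by
  have hkernel_int : ∫ u in Ioi s, exp (-(u * T⁻¹)) = T * exp (-(s * T⁻¹)) := by
    rw [integral_comp_mul_right_Ioi (fun x => exp (-x)) s (inv_pos.mpr hT),
      integral_exp_neg_Ioi, inv_inv, smul_eq_mul]
  have hkernel_integrable : IntegrableOn (fun u => exp (-(u * T⁻¹))) (Ioi s) := by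
    simpa only [mul_comm, neg_mul, mul_neg] using exp_neg_integrableOn_Ioi s (inv_pos.mpr hT)
  calc ∫ u in Ioi s, exp (-(u * T⁻¹)) * f u
      ≤ ∫ u in Ioi s, exp (-(u * T⁻¹)) * f s :=
        setIntegral_mono_on hint (hkernel_integrable.mul_const _) measurableSet_Ioi
          fun u hu => mul_le_mul_of_nonneg_left (hfmono s u hs hu.le) (exp_pos _).le
    _ = T * exp (-(s * T⁻¹)) * f s := by rw [integral_mul_const, hkernel_int]
    _ ≤ T * 1 * f s := by
        gcongr
        · exact hf0 s hs
        · exact exp_le_one_iff.mpr (neg_nonpos.mpr (by positivity))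
    _ = T * f s := by rw [mul_one]

theorem laplaceTransform_inv_le (hf0 : ∀ u > 0, 0 ≤ f u)
    (hfmono : ∀ s t : ℝ, 0 < s → s ≤ t → f t ≤ f s)
    (hint : ∀ t > 0, IntegrableOn (fun u => exp (-(u * t)) * f u) (Ioi 0)) {s T : ℝ}
    (hs : 0 < s) (hT : 0 < T) :
    laplaceTransform f T⁻¹ ≤ exp 1 * laplaceTransform f s⁻¹ + T * f s := by
  have hint_T := hint T⁻¹ (inv_pos.mpr hT)
  have hsplit : laplaceTransform f T⁻¹ = (∫ u in Ioc 0 s, exp (-(u * T⁻¹)) * f u)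
      + ∫ u in Ioi s, exp (-(u * T⁻¹)) * f u := by
    rw [laplaceTransform, ← Ioc_union_Ioi_eq_Ioi hs.le,
      setIntegral_union (Ioc_disjoint_Ioi le_rfl) measurableSet_Ioi
        (hint_T.mono_set Ioc_subset_Ioi_self) (hint_T.mono_set (Ioi_subset_Ioi hs.le))]
  rw [hsplit]
  exact add_le_add
    (setIntegral_Ioc_le_exp_one_mul_laplaceTransform hf0 hs (inv_pos.mpr hT).le
      (hint_T.mono_set Ioc_subset_Ioi_self) (hint s⁻¹ (inv_pos.mpr hs)))
    (setIntegral_Ioi_exp_mul_le hf0 hfmono hs hT (hint_T.mono_set (Ioi_subset_Ioi hs.le)))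

end

theorem exists_one_le_and_le_mul_rpow {a δ : ℝ} (ha : 0 < a) (hδ : 0 < δ) (C : ℝ) :
    ∃ K ≥ 1, C ≤ a * K ^ δ := by
  obtain ⟨K, hK⟩ := ((tendsto_rpow_atTop hδ).eventually_ge_atTop (C / a)).and
    (eventually_ge_atTop 1) |>.exists
  exact ⟨K, hK.2, by rw [← div_le_iff₀' ha]; exact hK.1⟩

theorem density_lower_from_laplace_scaling_general
    (f w : ℝ → ℝ) (a δ s₀ : ℝ)
    (ha : 0 < a) (hδ0 : 0 < δ) (hs₀ : 0 < s₀)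
    (hf0 : ∀ s > 0, 0 ≤ f s)
    (hfmono : ∀ s t : ℝ, 0 < s → s ≤ t → f t ≤ f s)
    (hint : ∀ t > 0, IntegrableOn (fun s => Real.exp (-(s * t)) * f s) (Set.Ioi 0))
    (hw : ∀ t > 0, w t = ∫ s in Set.Ioi (0:ℝ), Real.exp (-(s * t)) * f s)
    (hscal : ∀ lam t : ℝ, 0 < lam → lam ≤ 1 → 0 < t → t ≤ 1 / s₀ →
      a * lam ^ (-δ) * w t ≤ w (lam * t)) :
    ∃ c > 0, ∀ s ≥ s₀, c * s⁻¹ * w s⁻¹ ≤ f s := by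
  obtain ⟨K, hK1, hKa⟩ := exists_one_le_and_le_mul_rpow ha hδ0 (2 * exp 1)
  have hK0 : 0 < K := zero_lt_one.trans_le hK1
  refine ⟨a * K ^ δ / (2 * K), by positivity, fun s hs => ?_⟩
  have hs0 : 0 < s := hs₀.trans_le hs
  have hscale : a * K ^ δ * w s⁻¹ ≤ w (K * s)⁻¹ := by
    have h := hscal K⁻¹ s⁻¹ (inv_pos.mpr hK0) (inv_le_one_of_one_le₀ hK1) (inv_pos.mpr hs0)
      (by rw [one_div]; exact inv_anti₀ hs₀ hs)
    rwa [inv_rpow hK0.le, rpow_neg hK0.le, inv_inv, ← mul_inv] at h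
  have hsplit : w (K * s)⁻¹ ≤ exp 1 * w s⁻¹ + K * s * f s := by
    rw [hw _ (by positivity), hw _ (inv_pos.mpr hs0)]
    exact laplaceTransform_inv_le hf0 hfmono hint hs0 (by positivity)
  have hw_nonneg : 0 ≤ w s⁻¹ := by
    rw [hw _ (inv_pos.mpr hs0)]; exact laplaceTransform_nonneg hf0 _
  have hmain : a * K ^ δ * w s⁻¹ ≤ 2 * K * s * f s := by nlinarith
  calc a * K ^ δ / (2 * K) * s⁻¹ * w s⁻¹ = a * K ^ δ * w s⁻¹ / (2 * K * s) := by
        field_simp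
    _ ≤ f s := by rw [div_le_iff₀ (by positivity)]; linarith

/-- Lower bound for a non-increasing density from a scaling condition on its
Laplace transform at zero. -/
theorem density_lower_from_laplace_scaling
    (f w : ℝ → ℝ) (a δ s₀ : ℝ)
    (ha : 0 < a) (hδ0 : 0 < δ) (hδ1 : δ < 1) (hs₀ : 0 < s₀)
    (hf0 : ∀ s > 0, 0 ≤ f s)
    (hfmono : ∀ s t : ℝ, 0 < s → s ≤ t → f t ≤ f s)
    (hint : ∀ t > 0, IntegrableOn (fun s => Real.exp (-(s * t)) * f s) (Set.Ioi 0))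
    (hw : ∀ t > 0, w t = ∫ s in Set.Ioi (0:ℝ), Real.exp (-(s * t)) * f s)
    (hscal : ∀ lam t : ℝ, 0 < lam → lam ≤ 1 → 0 < t → t ≤ 1 / s₀ →
      a * lam ^ (-δ) * w t ≤ w (lam * t)) :
    ∃ c > 0, ∀ s ≥ s₀, c * s⁻¹ * w s⁻¹ ≤ f s :=
  density_lower_from_laplace_scaling_general f w a δ s₀ ha hδ0 hs₀ hf0 hfmono hint hw hscal
end

section
/- Let φ be a Bernstein function with φ(0+)=0 and no drift, with Lévy measure μ(t)dt, and suppose the tail u*(s) := μ(s,∞) satisfies c₁^{−1} φ(s^{−1}) ≤ u*(s) ≤ c₁ φ(s^{−1}) for all s ≥ 1 and some c₁ > 0, where φ satisfies a₃(R/r)^{δ₃} ≤ φ(R)/φ(r) for all r ≤ R ≤ 1 with δ₃∈(0,1), a₃>0. Then there exists c > 0 such that the Lévy density satisfies μ(t) ≥ c t^{−1} φ(t^{−1}) for all t ≥ 1. -/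
/-!
Since u* is comparable to φ(1/s), the lower scaling of φ makes u*(K t) small compared with u*(t)
once K is large, so the mass u*(t) - u*(K t) of (t, K t] is still of order φ(1/t). As μ is
non-increasing, that mass is at most (K - 1) t μ(t).
-/

open MeasureTheory Filter Set

lemma exists_one_lt_le_mul_rpow {a δ : ℝ} (ha : 0 < a) (hδ : 0 < δ) (B : ℝ) :
    ∃ K, 1 < K ∧ B ≤ a * K ^ δ :=
  ((((tendsto_rpow_atTop hδ).const_mul_atTop ha).eventually_ge_atTop B).and
    (eventually_gt_atTop 1)).exists.imp fun _ h => ⟨h.2, h.1⟩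

lemma AntitoneOn.intervalIntegral_le_sub_mul {f : ℝ → ℝ} {a b : ℝ}
    (hf : AntitoneOn f (Icc a b)) (hab : a ≤ b) :
    ∫ x in a..b, f x ≤ (b - a) * f a := by
  have hint : IntervalIntegrable f volume a b := (uIcc_of_le hab ▸ hf).intervalIntegrable
  calc ∫ x in a..b, f x ≤ ∫ _ in a..b, f a :=
        intervalIntegral.integral_mono_on hab hint intervalIntegrable_const
          fun x hx => hf ⟨le_rfl, hab⟩ hx hx.1
    _ = (b - a) * f a := by rw [intervalIntegral.integral_const, smul_eq_mul]

lemma mul_rpow_mul_le_of_lower_scaling {φ : ℝ → ℝ} {a δ : ℝ} (hφpos : ∀ x > 0, 0 < φ x)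
    (hscale : ∀ r R : ℝ, 0 < r → r ≤ R → R ≤ 1 → a * (R / r) ^ δ ≤ φ R / φ r)
    {K t : ℝ} (hK : 1 ≤ K) (ht : 1 ≤ t) :
    a * K ^ δ * φ (K * t)⁻¹ ≤ φ t⁻¹ := by
  have ht0 : 0 < t := by linarith
  have h := hscale (K * t)⁻¹ t⁻¹ (by positivity)
    (inv_anti₀ ht0 (le_mul_of_one_le_left ht0.le hK)) (inv_le_one_of_one_le₀ ht)
  rwa [show t⁻¹ / (K * t)⁻¹ = K by field_simp, le_div_iff₀ (hφpos _ (by positivity))] at h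

theorem levy_density_lower_bound_at_infinity_general
    (φ μf : ℝ → ℝ) (c₁ a₃ δ₃ : ℝ)
    (hc₁ : 0 < c₁) (ha₃ : 0 < a₃) (hδ₃0 : 0 < δ₃)
    (hφpos : ∀ x > 0, 0 < φ x)
    (hμmono : ∀ s t : ℝ, 0 < s → s ≤ t → μf t ≤ μf s)
    (htail : ∀ s ≥ (1:ℝ),
      c₁⁻¹ * φ s⁻¹ ≤ (∫ t in Set.Ioi s, μf t) ∧ (∫ t in Set.Ioi s, μf t) ≤ c₁ * φ s⁻¹)
    (hH2 : ∀ r R : ℝ, 0 < r → r ≤ R → R ≤ 1 → a₃ * (R / r) ^ δ₃ ≤ φ R / φ r) :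
    ∃ c > 0, ∀ t ≥ (1:ℝ), c * t⁻¹ * φ t⁻¹ ≤ μf t := by
  obtain ⟨K, hK1, hK⟩ := exists_one_lt_le_mul_rpow ha₃ hδ₃0 (2 * c₁ ^ 2)
  have hK1' : 0 < K - 1 := sub_pos.2 hK1
  refine ⟨(2 * c₁ * (K - 1))⁻¹, by positivity, fun t ht => ?_⟩
  have ht0 : 0 < t := by linarith
  have htKt : t ≤ K * t := le_mul_of_one_le_left ht0.le hK1.le
  have hφt : 0 < φ t⁻¹ := hφpos _ (by positivity)
  have hφKt : 0 < φ (K * t)⁻¹ := hφpos _ (by positivity)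
  have hint : IntegrableOn μf (Ioi t) :=
    Integrable.of_integral_ne_zero ((by positivity : 0 < c₁⁻¹ * φ t⁻¹).trans_le (htail t ht).1).ne'
  have hsmall : 2 * c₁ ^ 2 * φ (K * t)⁻¹ ≤ φ t⁻¹ :=
    (mul_le_mul_of_nonneg_right hK hφKt.le).trans
      (mul_rpow_mul_le_of_lower_scaling hφpos hH2 hK1.le ht)
  have hmass : φ t⁻¹ / (2 * c₁) ≤ ∫ x in t..K * t, μf x := by
    rw [← intervalIntegral.integral_Ioi_sub_Ioi hint htKt]
    have hlow := (htail t ht).1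
    have hup := (htail (K * t) (ht.trans htKt)).2
    have hKt_small : c₁ * φ (K * t)⁻¹ ≤ φ t⁻¹ / (2 * c₁) := by
      rw [le_div_iff₀ (by positivity)]; nlinarith
    have hhalf : c₁⁻¹ * φ t⁻¹ = 2 * (φ t⁻¹ / (2 * c₁)) := by field_simp
    linarith
  have hmid : ∫ x in t..K * t, μf x ≤ (K * t - t) * μf t :=
    AntitoneOn.intervalIntegral_le_sub_mul
      (fun x hx y _ hxy => hμmono x y (ht0.trans_le hx.1) hxy) htKt
  rw [show (2 * c₁ * (K - 1))⁻¹ * t⁻¹ * φ t⁻¹ = φ t⁻¹ / (2 * c₁) / ((K - 1) * t) by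
    field_simp, div_le_iff₀ (by positivity)]
  linarith

/-- Lower bound for the Lévy density of a complete Bernstein function whose tail is
comparable to φ(1/s) for s ≥ 1, under the lower scaling condition of (H2). -/
theorem levy_density_lower_bound_at_infinity
    (φ μf : ℝ → ℝ) (c₁ a₃ δ₃ : ℝ)
    (hc₁ : 0 < c₁) (ha₃ : 0 < a₃) (hδ₃0 : 0 < δ₃) (hδ₃1 : δ₃ < 1)
    (hφpos : ∀ x > 0, 0 < φ x)
    (hμpos : ∀ t > 0, 0 < μf t)
    (hμmono : ∀ s t : ℝ, 0 < s → s ≤ t → μf t ≤ μf s)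
    (hrep : ∀ lam > 0, φ lam = ∫ t in Set.Ioi (0:ℝ), (1 - Real.exp (-(lam * t))) * μf t)
    (htail : ∀ s ≥ (1:ℝ),
      c₁⁻¹ * φ s⁻¹ ≤ (∫ t in Set.Ioi s, μf t) ∧ (∫ t in Set.Ioi s, μf t) ≤ c₁ * φ s⁻¹)
    (hH2 : ∀ r R : ℝ, 0 < r → r ≤ R → R ≤ 1 → a₃ * (R / r) ^ δ₃ ≤ φ R / φ r) :
    ∃ c > 0, ∀ t ≥ (1:ℝ), c * t⁻¹ * φ t⁻¹ ≤ μf t :=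
  levy_density_lower_bound_at_infinity_general φ μf c₁ a₃ δ₃ hc₁ ha₃ hδ₃0 hφpos hμmono htail hH2
end

section
/- Let μ:(0,∞)→(0,∞) be non-increasing and satisfy μ(t) ≤ C t^{−1} φ(t^{−1}) for all t > 0, where φ:(0,∞)→(0,∞) is increasing and satisfies φ(v)/v ≤ φ(u)/u for 0<u≤v. Define j(r) = ∫₀^∞ (4πt)^{−d/2} e^{−r²/(4t)} μ(t) dt. Then there exists a constant c = c(d, C) > 0 such that j(r) ≤ c r^{−d} φ(r^{−2}) for all r > 0. -/
/-!
Split the integral at `t = r²`. For `t ≤ r²` the ratio condition gives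
`φ(t⁻¹) ≤ (r²/t) φ(r⁻²)`, and `e^{-x} ≤ n!/xⁿ` with `n = d + 2` turns the Gaussian factor into a
power of `t` that is integrable at `0`. For `t > r²` monotonicity gives `φ(t⁻¹) ≤ φ(r⁻²)`, and
`e^{-x} ≤ 1` leaves `∫_{r²}^∞ t^{-d/2-1} dt`. Both pieces are multiples of `r^{-d} φ(r⁻²)`.
-/

open MeasureTheory Set Real

theorem exp_neg_le_factorial_div_pow (n : ℕ) {x : ℝ} (hx : 0 < x) :
    exp (-x) ≤ n.factorial / x ^ n := by
  rw [exp_neg, inv_le_comm₀ (exp_pos x) (by positivity), inv_div]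
  exact pow_div_factorial_le_exp x hx.le n

theorem setLIntegral_Ioc_zero_const_mul_rpow {K a s : ℝ} (hK : 0 ≤ K) (ha : -1 < a)
    (hs : 0 ≤ s) :
    ∫⁻ t in Ioc 0 s, ENNReal.ofReal (K * t ^ a) =
      ENNReal.ofReal (K * (s ^ (a + 1) / (a + 1))) := by
  have hint : IntegrableOn (fun t : ℝ ↦ t ^ a) (Ioc 0 s) :=
    (intervalIntegrable_iff_integrableOn_Ioc_of_le hs).mp
      (intervalIntegral.intervalIntegrable_rpow' ha)
  rw [← ofReal_integral_eq_lintegral_ofReal (hint.const_mul K), integral_const_mul,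
    ← intervalIntegral.integral_of_le hs, integral_rpow (Or.inl ha),
    zero_rpow (by linarith), sub_zero]
  filter_upwards [ae_restrict_mem measurableSet_Ioc] with t ht
  have := ht.1
  positivity

theorem setLIntegral_Ioi_const_mul_rpow {K a s : ℝ} (hK : 0 ≤ K) (ha : a < -1)
    (hs : 0 < s) :
    ∫⁻ t in Ioi s, ENNReal.ofReal (K * t ^ a) =
      ENNReal.ofReal (K * (-s ^ (a + 1) / (a + 1))) := by
  rw [← ofReal_integral_eq_lintegral_ofReal ((integrableOn_Ioi_rpow_of_lt ha hs).const_mul K),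
    integral_const_mul, integral_Ioi_rpow_of_lt ha hs]
  filter_upwards [ae_restrict_mem measurableSet_Ioi] with t ht
  have := hs.trans ht
  positivity

theorem le_div_mul_of_div_antitone {φ : ℝ → ℝ}
    (hratio : ∀ u v : ℝ, 0 < u → u ≤ v → φ v / v ≤ φ u / u) {u v : ℝ} (hu : 0 < u)
    (huv : u ≤ v) : φ v ≤ v / u * φ u := by
  have := hratio u v hu huv
  rw [div_le_div_iff₀ (hu.trans_le huv) hu] at this
  rw [div_mul_eq_mul_div, le_div_iff₀ hu]
  linarith

theorem heat_kernel_le_rpow (a : ℝ) {s t : ℝ} (hs : 0 ≤ s) (ht : 0 < t) :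
    (4 * π * t) ^ (-a) * exp (-(s / (4 * t))) ≤ (4 * π) ^ (-a) * t ^ (-a) := by
  rw [← mul_rpow (by positivity) ht.le]
  refine mul_le_of_le_one_right (by positivity) (exp_le_one_iff.mpr ?_)
  have : 0 ≤ s / (4 * t) := by positivity
  linarith

theorem heat_kernel_le_factorial_mul_rpow (a : ℝ) (n : ℕ) {s t : ℝ} (hs : 0 < s)
    (ht : 0 < t) :
    (4 * π * t) ^ (-a) * exp (-(s / (4 * t))) ≤
      (4 * π) ^ (-a) * (n.factorial * 4 ^ n / s ^ n) * t ^ ((n : ℝ) - a) := by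
  have hexp := exp_neg_le_factorial_div_pow n (x := s / (4 * t)) (by positivity)
  calc (4 * π * t) ^ (-a) * exp (-(s / (4 * t)))
      ≤ (4 * π) ^ (-a) * t ^ (-a) * (n.factorial / (s / (4 * t)) ^ n) := by
        rw [← mul_rpow (by positivity) ht.le]
        gcongr
    _ = (4 * π) ^ (-a) * (n.factorial * 4 ^ n / s ^ n) * (t ^ (-a) * t ^ (n : ℝ)) := by
        rw [rpow_natCast, div_pow, mul_pow]
        field_simp
    _ = _ := by rw [← rpow_add ht, neg_add_eq_sub]

section SubordinateBound

variable {a C s : ℝ} {μf φ : ℝ → ℝ}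

theorem setLIntegral_Ioc_heat_kernel_mul_le (n : ℕ) (hn : a + 1 < n) (hC : 0 ≤ C) (hs : 0 < s)
    (hφs : 0 ≤ φ s⁻¹) (hratio : ∀ u v : ℝ, 0 < u → u ≤ v → φ v / v ≤ φ u / u)
    (hμub : ∀ t > 0, μf t ≤ C * t⁻¹ * φ t⁻¹) :
    ∫⁻ t in Ioc 0 s, ENNReal.ofReal ((4 * π * t) ^ (-a) * exp (-(s / (4 * t))) * μf t) ≤
      ENNReal.ofReal
        (C * (4 * π) ^ (-a) * (n.factorial * 4 ^ n / (n - a - 1)) * s ^ (-a) * φ s⁻¹) := by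
  set K := C * (4 * π) ^ (-a) * (n.factorial * 4 ^ n / s ^ n) * s * φ s⁻¹
  have hpoint : ∀ t ∈ Ioc 0 s, (4 * π * t) ^ (-a) * exp (-(s / (4 * t))) * μf t ≤
      K * t ^ ((n : ℝ) - a - 2) := by
    rintro t ⟨ht, hts⟩
    have hμt : μf t ≤ C * t⁻¹ * (s / t * φ s⁻¹) := by
      have hφt := le_div_mul_of_div_antitone hratio (inv_pos.mpr hs) (inv_anti₀ ht hts)
      rw [inv_div_inv] at hφt
      exact (hμub t ht).trans (by gcongr)
    calc (4 * π * t) ^ (-a) * exp (-(s / (4 * t))) * μf t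
        ≤ (4 * π * t) ^ (-a) * exp (-(s / (4 * t))) * (C * t⁻¹ * (s / t * φ s⁻¹)) := by
          gcongr
      _ ≤ (4 * π) ^ (-a) * (n.factorial * 4 ^ n / s ^ n) * t ^ ((n : ℝ) - a) *
            (C * t⁻¹ * (s / t * φ s⁻¹)) := by
          exact mul_le_mul_of_nonneg_right (heat_kernel_le_factorial_mul_rpow a n hs ht)
            (by positivity)
      _ = K * (t ^ ((n : ℝ) - a) / t ^ (2 : ℝ)) := by
          rw [rpow_two]
          ring
      _ = K * t ^ ((n : ℝ) - a - 2) := by rw [← rpow_sub ht]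
  have hK : 0 ≤ K := by positivity
  calc _ ≤ ∫⁻ t in Ioc 0 s, ENNReal.ofReal (K * t ^ ((n : ℝ) - a - 2)) :=
        setLIntegral_mono' measurableSet_Ioc fun t ht ↦ ENNReal.ofReal_le_ofReal (hpoint t ht)
    _ = ENNReal.ofReal (K * (s ^ ((n : ℝ) - a - 2 + 1) / ((n : ℝ) - a - 2 + 1))) :=
        setLIntegral_Ioc_zero_const_mul_rpow hK (by linarith) hs.le
    _ = _ := by
        have hpow : s ^ ((n : ℝ) - a - 2 + 1) = s ^ n * s ^ (-a) / s := by
          rw [show (n : ℝ) - a - 2 + 1 = n + -a - 1 by ring, rpow_sub hs, rpow_add hs,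
            rpow_one, rpow_natCast]
        rw [hpow, show (n : ℝ) - a - 2 + 1 = n - a - 1 by ring]
        congr 1
        simp only [K]
        field_simp

theorem setLIntegral_Ioi_heat_kernel_mul_le (ha : 0 < a) (hC : 0 ≤ C) (hs : 0 < s)
    (hφs : 0 ≤ φ s⁻¹) (hφmono : ∀ x y : ℝ, 0 < x → x ≤ y → φ x ≤ φ y)
    (hμub : ∀ t > 0, μf t ≤ C * t⁻¹ * φ t⁻¹) :
    ∫⁻ t in Ioi s, ENNReal.ofReal ((4 * π * t) ^ (-a) * exp (-(s / (4 * t))) * μf t) ≤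
      ENNReal.ofReal (C * (4 * π) ^ (-a) / a * s ^ (-a) * φ s⁻¹) := by
  set K := C * (4 * π) ^ (-a) * φ s⁻¹
  have hpoint : ∀ t ∈ Ioi s, (4 * π * t) ^ (-a) * exp (-(s / (4 * t))) * μf t ≤
      K * t ^ (-a - 1) := by
    intro t hst
    have ht : 0 < t := hs.trans hst
    have hμt : μf t ≤ C * t⁻¹ * φ s⁻¹ :=
      (hμub t ht).trans (by gcongr; exact hφmono _ _ (inv_pos.mpr ht) (inv_anti₀ hs hst.le))
    calc (4 * π * t) ^ (-a) * exp (-(s / (4 * t))) * μf t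
        ≤ (4 * π * t) ^ (-a) * exp (-(s / (4 * t))) * (C * t⁻¹ * φ s⁻¹) := by gcongr
      _ ≤ (4 * π) ^ (-a) * t ^ (-a) * (C * t⁻¹ * φ s⁻¹) := by
          exact mul_le_mul_of_nonneg_right (heat_kernel_le_rpow a hs.le ht) (by positivity)
      _ = K * (t ^ (-a) * t⁻¹) := by ring
      _ = K * t ^ (-a - 1) := by rw [rpow_sub ht, rpow_one, div_eq_mul_inv]
  have hK : 0 ≤ K := by positivity
  calc _ ≤ ∫⁻ t in Ioi s, ENNReal.ofReal (K * t ^ (-a - 1)) :=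
        setLIntegral_mono' measurableSet_Ioi fun t ht ↦ ENNReal.ofReal_le_ofReal (hpoint t ht)
    _ = ENNReal.ofReal (K * (-s ^ (-a - 1 + 1) / (-a - 1 + 1))) :=
        setLIntegral_Ioi_const_mul_rpow hK (by linarith) hs
    _ = _ := by
        rw [sub_add_cancel]
        congr 1
        simp only [K]
        field_simp

theorem setLIntegral_Ioi_zero_heat_kernel_mul_le (ha : 0 < a) (n : ℕ) (hn : a + 1 < n)
    (hC : 0 ≤ C) (hs : 0 < s) (hφs : 0 ≤ φ s⁻¹)
    (hφmono : ∀ x y : ℝ, 0 < x → x ≤ y → φ x ≤ φ y)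
    (hratio : ∀ u v : ℝ, 0 < u → u ≤ v → φ v / v ≤ φ u / u)
    (hμub : ∀ t > 0, μf t ≤ C * t⁻¹ * φ t⁻¹) :
    ∫⁻ t in Ioi 0, ENNReal.ofReal ((4 * π * t) ^ (-a) * exp (-(s / (4 * t))) * μf t) ≤
      ENNReal.ofReal (C * (4 * π) ^ (-a) * (n.factorial * 4 ^ n / (n - a - 1) + 1 / a) *
        s ^ (-a) * φ s⁻¹) := by
  have hn' : 0 < (n : ℝ) - a - 1 := by linarith
  rw [← Ioc_union_Ioi_eq_Ioi hs.le, lintegral_union measurableSet_Ioi Ioc_disjoint_Ioi_same]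
  calc _ ≤ ENNReal.ofReal
          (C * (4 * π) ^ (-a) * (n.factorial * 4 ^ n / (n - a - 1)) * s ^ (-a) * φ s⁻¹) +
        ENNReal.ofReal (C * (4 * π) ^ (-a) / a * s ^ (-a) * φ s⁻¹) :=
        add_le_add (setLIntegral_Ioc_heat_kernel_mul_le n hn hC hs hφs hratio hμub)
          (setLIntegral_Ioi_heat_kernel_mul_le ha hC hs hφs hφmono hμub)
    _ = _ := by
        rw [← ENNReal.ofReal_add (by positivity) (by positivity)]
        ring_nf

end SubordinateBound

theorem jumping_function_upper_bound_general
    (d : ℕ) (hd : 1 ≤ d) (μf φ : ℝ → ℝ) (C : ℝ) (hC : 0 < C)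
    (hφpos : ∀ x > 0, 0 < φ x)
    (hφmono : ∀ x y : ℝ, 0 < x → x ≤ y → φ x ≤ φ y)
    (hratio : ∀ u v : ℝ, 0 < u → u ≤ v → φ v / v ≤ φ u / u)
    (hμub : ∀ t > 0, μf t ≤ C * t⁻¹ * φ t⁻¹) :
    ∃ c > 0, ∀ r > 0,
      (∫⁻ t in Set.Ioi (0:ℝ),
        ENNReal.ofReal ((4 * Real.pi * t) ^ (-(d:ℝ)/2) * Real.exp (-(r^2 / (4*t))) * μf t))
      ≤ ENNReal.ofReal (c * r ^ (-(d:ℝ)) * φ ((r^2)⁻¹)) := by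
  have ha : (0 : ℝ) < d / 2 := by
    have : (1 : ℝ) ≤ d := by exact_mod_cast hd
    linarith
  have hn : (d / 2 : ℝ) + 1 < (d + 2 : ℕ) := by push_cast; linarith
  have hn' : 0 < ((d + 2 : ℕ) : ℝ) - d / 2 - 1 := by linarith
  refine ⟨C * (4 * π) ^ (-(d / 2 : ℝ)) * ((d + 2).factorial * 4 ^ (d + 2) /
    ((d + 2 : ℕ) - d / 2 - 1) + 1 / (d / 2)), by positivity, fun r hr ↦ ?_⟩
  have hr2 : r ^ (-(d : ℝ)) = (r ^ 2) ^ (-(d / 2 : ℝ)) := by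
    rw [← rpow_natCast, ← rpow_mul hr.le]
    ring_nf
  rw [neg_div, hr2]
  exact setLIntegral_Ioi_zero_heat_kernel_mul_le ha (d + 2) hn hC.le (pow_pos hr 2)
    (hφpos _ (by positivity)).le hφmono hratio hμub

/-- Upper bound for the jumping function of a subordinate Brownian motion. -/
theorem jumping_function_upper_bound
    (d : ℕ) (hd : 1 ≤ d) (μf φ : ℝ → ℝ) (C : ℝ) (hC : 0 < C)
    (hφpos : ∀ x > 0, 0 < φ x)
    (hφmono : ∀ x y : ℝ, 0 < x → x ≤ y → φ x ≤ φ y)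
    (hratio : ∀ u v : ℝ, 0 < u → u ≤ v → φ v / v ≤ φ u / u)
    (hμpos : ∀ t > 0, 0 < μf t)
    (hμmono : ∀ s t : ℝ, 0 < s → s ≤ t → μf t ≤ μf s)
    (hμub : ∀ t > 0, μf t ≤ C * t⁻¹ * φ t⁻¹) :
    ∃ c > 0, ∀ r > 0,
      (∫⁻ t in Set.Ioi (0:ℝ),
        ENNReal.ofReal ((4 * Real.pi * t) ^ (-(d:ℝ)/2) * Real.exp (-(r^2 / (4*t))) * μf t))
      ≤ ENNReal.ofReal (c * r ^ (-(d:ℝ)) * φ ((r^2)⁻¹)) :=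
  jumping_function_upper_bound_general d hd μf φ C hC hφpos hφmono hratio hμub
end

section
/- Let g:(0,∞)→(0,∞) be non-increasing and right continuous, r > 0, x₀ ∈ ℝ, M > 0, and h(s) := g(r + |s − x₀|) for s ∈ [0,M]. Then the non-increasing rearrangement h* of h satisfies h*(s) ≤ g(r + s/2) for all s ∈ [0,M]. -/
/-!
For a level `λ ≥ g (r + s / 2)`, monotonicity of `g` confines the superlevel set `{h > λ}` to the
interval of length `s` centred at `x₀`, so `s` lies outside the layer `[0, |{h > λ}|)`. Hence only
the levels `0 < λ < g (r + s / 2)` contribute to `h* s`.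
-/

open MeasureTheory Set

theorem setOf_lt_comp_abs_sub_subset_ball {g : ℝ → ℝ} (hg : AntitoneOn g (Ioi 0))
    {r d lam : ℝ} (x₀ : ℝ) (hr : 0 < r) (hd : 0 ≤ d) (hlam : g (r + d) ≤ lam) :
    {t : ℝ | lam < g (r + |t - x₀|)} ⊆ Metric.ball x₀ d := by
  intro t ht
  rw [Metric.mem_ball, Real.dist_eq]
  by_contra! hfar
  have hle : g (r + |t - x₀|) ≤ g (r + d) :=
    hg (show 0 < r + d by linarith) (show 0 < r + |t - x₀| by positivity) (by linarith)
  exact (hle.trans hlam).not_gt ht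

theorem setLIntegral_indicator_Iio_le {φ : ℝ → ℝ} {s c : ℝ}
    (hφ : ∀ lam, c ≤ lam → φ lam ≤ s) :
    ∫⁻ lam in Ioi 0, (Iio (φ lam)).indicator (fun _ => (1 : ENNReal)) s ≤ ENNReal.ofReal c := by
  calc ∫⁻ lam in Ioi 0, (Iio (φ lam)).indicator (fun _ => (1 : ENNReal)) s
      ≤ ∫⁻ lam in Ioi 0, (Iio c).indicator (fun _ => 1) lam := by
        refine lintegral_mono fun lam => ?_
        by_cases hlam : lam < c
        · simp only [indicator_of_mem (mem_Iio.mpr hlam)]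
          exact indicator_le (fun _ _ => le_rfl) s
        · simp [hφ lam (not_lt.mp hlam)]
    _ = ENNReal.ofReal c := by
        rw [lintegral_indicator measurableSet_Iio, setLIntegral_one,
          Measure.restrict_apply measurableSet_Iio, Iio_inter_Ioi, Real.volume_Ioo, sub_zero]

theorem rearrangement_bound_general
    (g : ℝ → ℝ) (r x₀ M : ℝ) (hr : 0 < r)
    (hgmono : ∀ x y : ℝ, 0 < x → x ≤ y → g y ≤ g x) :
    ∀ s ∈ Set.Icc (0:ℝ) M,
      (∫⁻ lam in Set.Ioi (0:ℝ),
        Set.indicator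
          (Set.Iio ((volume {t ∈ Set.Icc (0:ℝ) M | lam < g (r + |t - x₀|)}).toReal))
          (fun _ => (1:ENNReal)) s)
      ≤ ENNReal.ofReal (g (r + s / 2)) := by
  intro s hs
  have hg : AntitoneOn g (Ioi 0) := fun x hx y _ hxy => hgmono x y hx hxy
  refine setLIntegral_indicator_Iio_le fun lam hlam => ENNReal.toReal_le_of_le_ofReal hs.1 ?_
  calc volume {t ∈ Icc 0 M | lam < g (r + |t - x₀|)}
      ≤ volume (Metric.ball x₀ (s / 2)) :=
        measure_mono ((sep_subset_ofPred _ _).trans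
          (setOf_lt_comp_abs_sub_subset_ball hg x₀ hr (by linarith [hs.1]) hlam))
    _ = ENNReal.ofReal s := by rw [Real.volume_ball]; ring_nf

/-- The non-increasing rearrangement of s ↦ g(r + |s − x₀|) on [0,M] is bounded by
g(r + s/2). -/
theorem rearrangement_bound
    (g : ℝ → ℝ) (r x₀ M : ℝ) (hr : 0 < r) (hM : 0 < M)
    (hgpos : ∀ x > 0, 0 < g x)
    (hgmono : ∀ x y : ℝ, 0 < x → x ≤ y → g y ≤ g x)
    (hgrc : ∀ x > 0, ContinuousWithinAt g (Set.Ici x) x) :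
    ∀ s ∈ Set.Icc (0:ℝ) M,
      (∫⁻ lam in Set.Ioi (0:ℝ),
        Set.indicator
          (Set.Iio ((volume {t ∈ Set.Icc (0:ℝ) M | lam < g (r + |t - x₀|)}).toReal))
          (fun _ => (1:ENNReal)) s)
      ≤ ENNReal.ofReal (g (r + s / 2)) :=
  rearrangement_bound_general g r x₀ M hr hgmono
end

section
/- Suppose φ:(0,∞)→(0,∞) is increasing and satisfies a₅(R/r)^{δ} ≤ φ(R)/φ(r) ≤ a₆(R/r)^{δ'} for all 0<r<R<∞ with 0<δ≤δ'<1 and a₅,a₆>0. Then there exists c>0 depending only on a₅,a₆,δ,δ' such that for all λ > 0: λ² ∫₀^{1/λ} r φ(r^{−2}) dr + ∫_{1/λ}^∞ r^{−1} φ(r^{−2}) dr ≤ c φ(λ²). -/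
/-!
Write `ψ r = φ (r⁻²)` and `b = 1/λ`. The two halves of the scaling condition give
`ψ r ≤ C (b / r)^{2δ'} ψ b` for `r < b` and `ψ r ≤ C (b / r)^{2δ} ψ b` for `r > b`,
so both integrands are dominated by power functions whose integrals converge exactly because
`δ' < 1` (at `0`) and `δ > 0` (at `∞`); the powers of `b` cancel against `λ²`.
-/

open MeasureTheory Set

section PowerBounds

variable {f : ℝ → ℝ} {b C s : ℝ}

/-- `f` need not be integrable: if it is not, its integral is `0`. -/
lemma setIntegral_Ioc_zero_le_of_le_rpow (hb : 0 ≤ b) (hs : -1 < s)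
    (hf_nonneg : ∀ x ∈ Ioc 0 b, 0 ≤ f x) (hf_le : ∀ x ∈ Ioo 0 b, f x ≤ C * x ^ s) :
    ∫ x in Ioc 0 b, f x ≤ C * (b ^ (s + 1) / (s + 1)) := by
  have h_int : IntegrableOn (fun x : ℝ => C * x ^ s) (Ioo 0 b) := by
    refine (IntegrableOn.mono_set ?_ Ioo_subset_Ioc_self).const_mul C
    rw [← intervalIntegrable_iff_integrableOn_Ioc_of_le hb]
    exact intervalIntegral.intervalIntegrable_rpow' hs
  calc ∫ x in Ioc 0 b, f x = ∫ x in Ioo 0 b, f x := integral_Ioc_eq_integral_Ioo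
    _ ≤ ∫ x in Ioo 0 b, C * x ^ s :=
      integral_mono_of_nonneg
        (ae_restrict_of_forall_mem measurableSet_Ioo fun x hx =>
          hf_nonneg x (Ioo_subset_Ioc_self hx))
        h_int (ae_restrict_of_forall_mem measurableSet_Ioo hf_le)
    _ = C * (b ^ (s + 1) / (s + 1)) := by
      rw [integral_const_mul, ← integral_Ioc_eq_integral_Ioo,
        ← intervalIntegral.integral_of_le hb, integral_rpow (Or.inl hs),
        Real.zero_rpow (by linarith), sub_zero]

lemma setIntegral_Ioi_le_of_le_rpow (hb : 0 < b) (hs : s < -1)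
    (hf_nonneg : ∀ x ∈ Ioi b, 0 ≤ f x) (hf_le : ∀ x ∈ Ioi b, f x ≤ C * x ^ s) :
    ∫ x in Ioi b, f x ≤ C * (-b ^ (s + 1) / (s + 1)) :=
  calc ∫ x in Ioi b, f x ≤ ∫ x in Ioi b, C * x ^ s :=
        integral_mono_of_nonneg (ae_restrict_of_forall_mem measurableSet_Ioi hf_nonneg)
          ((integrableOn_Ioi_rpow_of_lt hs hb).const_mul C)
          (ae_restrict_of_forall_mem measurableSet_Ioi hf_le)
    _ = C * (-b ^ (s + 1) / (s + 1)) := by rw [integral_const_mul, integral_Ioi_rpow_of_lt hs hb]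

end PowerBounds

lemma rpow_mul_div_rpow {r b : ℝ} (hr : 0 < r) (hb : 0 ≤ b) (t x : ℝ) :
    r ^ t * (b / r) ^ x = b ^ x * r ^ (t - x) := by
  rw [Real.div_rpow hb hr.le, Real.rpow_sub hr]
  ring

lemma inv_sq_div_inv_sq_rpow {r b : ℝ} (hr : 0 < r) (hb : 0 < b) (δ : ℝ) :
    ((r ^ 2)⁻¹ / (b ^ 2)⁻¹) ^ δ = (b / r) ^ (2 * δ) := by
  rw [inv_div_inv, ← div_pow, Real.rpow_mul (by positivity), Real.rpow_two]

section InvSqScaling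

variable {φ : ℝ → ℝ} {a δ r b : ℝ}

lemma le_mul_rpow_of_scaling_upper (hφ_pos : ∀ x > 0, 0 < φ x)
    (h_upper : ∀ r R : ℝ, 0 < r → r < R → φ R / φ r ≤ a * (R / r) ^ δ)
    (hr : 0 < r) (hrb : r < b) :
    φ ((r ^ 2)⁻¹) ≤ a * (b / r) ^ (2 * δ) * φ ((b ^ 2)⁻¹) := by
  have hb : 0 < b := hr.trans hrb
  have h_lt : (b ^ 2)⁻¹ < (r ^ 2)⁻¹ := by gcongr
  have h := h_upper _ _ (by positivity) h_lt
  rwa [div_le_iff₀ (hφ_pos _ (by positivity)), inv_sq_div_inv_sq_rpow hr hb] at h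

lemma le_mul_rpow_of_scaling_lower (hφ_pos : ∀ x > 0, 0 < φ x)
    (h_lower : ∀ r R : ℝ, 0 < r → r < R → a * (R / r) ^ δ ≤ φ R / φ r) (ha : 0 < a)
    (hb : 0 < b) (hbr : b < r) :
    φ ((r ^ 2)⁻¹) ≤ a⁻¹ * (b / r) ^ (2 * δ) * φ ((b ^ 2)⁻¹) := by
  have hr : 0 < r := hb.trans hbr
  have h_lt : (r ^ 2)⁻¹ < (b ^ 2)⁻¹ := by gcongr
  have h := h_lower _ _ (by positivity) h_lt
  rw [le_div_iff₀ (hφ_pos _ (by positivity)), inv_sq_div_inv_sq_rpow hb hr] at h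
  rwa [← inv_div r b, Real.inv_rpow (by positivity), ← mul_inv, ← div_eq_inv_mul,
    le_div_iff₀ (by positivity), mul_comm]

lemma mul_le_rpow_of_scaling_upper (hφ_pos : ∀ x > 0, 0 < φ x)
    (h_upper : ∀ r R : ℝ, 0 < r → r < R → φ R / φ r ≤ a * (R / r) ^ δ)
    (hr : 0 < r) (hrb : r < b) :
    r * φ ((r ^ 2)⁻¹) ≤ a * b ^ (2 * δ) * φ ((b ^ 2)⁻¹) * r ^ (1 - 2 * δ) :=
  calc r * φ ((r ^ 2)⁻¹) ≤ r ^ (1 : ℝ) * (a * (b / r) ^ (2 * δ) * φ ((b ^ 2)⁻¹)) := by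
        rw [Real.rpow_one]
        exact mul_le_mul_of_nonneg_left (le_mul_rpow_of_scaling_upper hφ_pos h_upper hr hrb) hr.le
    _ = a * b ^ (2 * δ) * φ ((b ^ 2)⁻¹) * r ^ (1 - 2 * δ) := by
        rw [← mul_assoc, mul_left_comm, rpow_mul_div_rpow hr (hr.trans hrb).le]
        ring

lemma inv_mul_le_rpow_of_scaling_lower (hφ_pos : ∀ x > 0, 0 < φ x)
    (h_lower : ∀ r R : ℝ, 0 < r → r < R → a * (R / r) ^ δ ≤ φ R / φ r) (ha : 0 < a)
    (hb : 0 < b) (hbr : b < r) :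
    r⁻¹ * φ ((r ^ 2)⁻¹) ≤
      a⁻¹ * b ^ (2 * δ) * φ ((b ^ 2)⁻¹) * r ^ (-1 - 2 * δ) := by
  have hr : 0 < r := hb.trans hbr
  calc r⁻¹ * φ ((r ^ 2)⁻¹)
        ≤ r ^ (-1 : ℝ) * (a⁻¹ * (b / r) ^ (2 * δ) * φ ((b ^ 2)⁻¹)) := by
        rw [Real.rpow_neg_one]
        exact mul_le_mul_of_nonneg_left (le_mul_rpow_of_scaling_lower hφ_pos h_lower ha hb hbr)
          (inv_nonneg.2 hr.le)
    _ = a⁻¹ * b ^ (2 * δ) * φ ((b ^ 2)⁻¹) * r ^ (-1 - 2 * δ) := by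
        rw [← mul_assoc, mul_left_comm, rpow_mul_div_rpow hr hb.le]
        ring

lemma setIntegral_Ioc_mul_le_of_scaling_upper (hφ_pos : ∀ x > 0, 0 < φ x)
    (h_upper : ∀ r R : ℝ, 0 < r → r < R → φ R / φ r ≤ a * (R / r) ^ δ) (hδ : δ < 1)
    (hb : 0 < b) :
    ∫ r in Ioc 0 b, r * φ ((r ^ 2)⁻¹) ≤ a / (2 - 2 * δ) * b ^ 2 * φ ((b ^ 2)⁻¹) := by
  have h := setIntegral_Ioc_zero_le_of_le_rpow hb.le (by linarith : -1 < 1 - 2 * δ)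
    (fun r hr => mul_nonneg hr.1.le (hφ_pos _ (inv_pos.2 (pow_pos hr.1 2))).le)
    (fun r hr => mul_le_rpow_of_scaling_upper hφ_pos h_upper hr.1 hr.2)
  have h_pow : b ^ (2 * δ) * b ^ (1 - 2 * δ + 1) = b ^ 2 := by
    rw [← Real.rpow_add hb, show 2 * δ + (1 - 2 * δ + 1) = (2 : ℕ) by ring, Real.rpow_natCast]
  refine h.trans_eq ?_
  rw [← h_pow, show 1 - 2 * δ + 1 = 2 - 2 * δ by ring]
  ring

lemma setIntegral_Ioi_inv_mul_le_of_scaling_lower (hφ_pos : ∀ x > 0, 0 < φ x)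
    (h_lower : ∀ r R : ℝ, 0 < r → r < R → a * (R / r) ^ δ ≤ φ R / φ r) (ha : 0 < a)
    (hδ : 0 < δ) (hb : 0 < b) :
    ∫ r in Ioi b, r⁻¹ * φ ((r ^ 2)⁻¹) ≤ 1 / (2 * δ * a) * φ ((b ^ 2)⁻¹) := by
  have h := setIntegral_Ioi_le_of_le_rpow hb (by linarith : -1 - 2 * δ < -1)
    (fun r hr => mul_nonneg (inv_nonneg.2 (hb.trans hr).le)
      (hφ_pos _ (inv_pos.2 (pow_pos (hb.trans hr) 2))).le)
    (fun r hr => inv_mul_le_rpow_of_scaling_lower hφ_pos h_lower ha hb hr)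
  have h_pow : b ^ (2 * δ) * b ^ (-1 - 2 * δ + 1) = 1 := by
    rw [← Real.rpow_add hb, show 2 * δ + (-1 - 2 * δ + 1) = 0 by ring, Real.rpow_zero]
  refine h.trans_eq ?_
  rw [show -1 - 2 * δ + 1 = -(2 * δ) by ring] at h_pow ⊢
  calc _ = a⁻¹ * (b ^ (2 * δ) * b ^ (-(2 * δ))) * φ ((b ^ 2)⁻¹) / (2 * δ) := by ring
    _ = 1 / (2 * δ * a) * φ ((b ^ 2)⁻¹) := by rw [h_pow]; ring

end InvSqScaling

theorem integral_estimate_phi_general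
    (φ : ℝ → ℝ) (a₅ a₆ δ δ' : ℝ)
    (ha₅ : 0 < a₅) (ha₆ : 0 < a₆) (hδ0 : 0 < δ) (hδ'1 : δ' < 1)
    (hφpos : ∀ x > 0, 0 < φ x)
    (hscal : ∀ r R : ℝ, 0 < r → r < R →
      a₅ * (R / r) ^ δ ≤ φ R / φ r ∧ φ R / φ r ≤ a₆ * (R / r) ^ δ') :
    ∃ c > 0, ∀ lam > 0,
      lam ^ 2 * (∫ r in Set.Ioc (0:ℝ) (1 / lam), r * φ ((r ^ 2)⁻¹))
        + (∫ r in Set.Ioi (1 / lam), r⁻¹ * φ ((r ^ 2)⁻¹))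
      ≤ c * φ (lam ^ 2) := by
  have hδ' : 0 < 2 - 2 * δ' := by linarith
  refine ⟨a₆ / (2 - 2 * δ') + 1 / (2 * δ * a₅), by positivity, fun lam hlam => ?_⟩
  have hb : 0 < 1 / lam := by positivity
  have h_inv_sq : ((1 / lam) ^ 2)⁻¹ = lam ^ 2 := by rw [one_div, inv_pow, inv_inv]
  have h_small := setIntegral_Ioc_mul_le_of_scaling_upper hφpos
    (fun r R hr hrR => (hscal r R hr hrR).2) hδ'1 hb
  have h_large := setIntegral_Ioi_inv_mul_le_of_scaling_lower hφpos
    (fun r R hr hrR => (hscal r R hr hrR).1) ha₅ hδ0 hb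
  rw [h_inv_sq] at h_small h_large
  calc _ ≤ lam ^ 2 * (a₆ / (2 - 2 * δ') * (1 / lam) ^ 2 * φ (lam ^ 2))
        + 1 / (2 * δ * a₅) * φ (lam ^ 2) := by gcongr
    _ = (a₆ / (2 - 2 * δ') + 1 / (2 * δ * a₅)) * φ (lam ^ 2) := by
        field_simp

/-- Karamata-type integral estimate (2.11). -/
theorem integral_estimate_phi
    (φ : ℝ → ℝ) (a₅ a₆ δ δ' : ℝ)
    (ha₅ : 0 < a₅) (ha₆ : 0 < a₆) (hδ0 : 0 < δ) (hδδ' : δ ≤ δ') (hδ'1 : δ' < 1)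
    (hφpos : ∀ x > 0, 0 < φ x)
    (hφmono : ∀ x y : ℝ, 0 < x → x ≤ y → φ x ≤ φ y)
    (hscal : ∀ r R : ℝ, 0 < r → r < R →
      a₅ * (R / r) ^ δ ≤ φ R / φ r ∧ φ R / φ r ≤ a₆ * (R / r) ^ δ') :
    ∃ c > 0, ∀ lam > 0,
      lam ^ 2 * (∫ r in Set.Ioc (0:ℝ) (1 / lam), r * φ ((r ^ 2)⁻¹))
        + (∫ r in Set.Ioi (1 / lam), r⁻¹ * φ ((r ^ 2)⁻¹))
      ≤ c * φ (lam ^ 2) :=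
  integral_estimate_phi_general φ a₅ a₆ δ δ' ha₅ ha₆ hδ0 hδ'1 hφpos hscal
end

section
/- Suppose φ:(0,∞)→(0,∞) is increasing and satisfies a₅(R/r)^{δ} ≤ φ(R)/φ(r) for all 0<r<R<∞ with δ∈(0,1), a₅>0. Then there exists c > 0 such that ∫₀^{1/λ} r^{−1} φ(r^{−2})^{−1} dr ≤ c φ(λ²)^{−1} for all λ > 0. -/
open MeasureTheory Set

/-! Applying the lower scaling between `λ²` and `r⁻²` gives
`r⁻¹ φ(r⁻²)⁻¹ ≤ a₅⁻¹ λ^{2δ} φ(λ²)⁻¹ r^{2δ-1}` for `0 < r < 1/λ`; since `2δ > 0` the right-hand side is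
integrable at `0` and its integral over `(0, 1/λ)` is `a₅⁻¹ (2δ)⁻¹ φ(λ²)⁻¹`. -/

lemma integral_Ioo_rpow_sub_one {b s : ℝ} (hb : 0 ≤ b) (hs : 0 < s) :
    ∫ r in Ioo 0 b, r ^ (s - 1) = b ^ s / s := by
  rw [← integral_Ioc_eq_integral_Ioo, ← intervalIntegral.integral_of_le hb,
    integral_rpow (Or.inl (by linarith)), sub_add_cancel, Real.zero_rpow hs.ne', sub_zero]

lemma setIntegral_Ioc_le_of_le_mul_rpow {f : ℝ → ℝ} {b s C : ℝ} (hb : 0 ≤ b) (hs : 0 < s)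
    (hf_nonneg : ∀ r ∈ Ioo 0 b, 0 ≤ f r) (hf_le : ∀ r ∈ Ioo 0 b, f r ≤ C * r ^ (s - 1)) :
    ∫ r in Ioc 0 b, f r ≤ C * (b ^ s / s) := by
  have hint : IntegrableOn (fun r : ℝ => r ^ (s - 1)) (Ioo 0 b) :=
    ((intervalIntegrable_iff_integrableOn_Ioc_of_le hb).mp
      (intervalIntegral.intervalIntegrable_rpow' (by linarith))).mono_set Ioo_subset_Ioc_self
  rw [integral_Ioc_eq_integral_Ioo, ← integral_Ioo_rpow_sub_one hb hs, ← integral_const_mul]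
  exact integral_mono_of_nonneg (ae_restrict_of_forall_mem measurableSet_Ioo hf_nonneg)
    (hint.const_mul C) (ae_restrict_of_forall_mem measurableSet_Ioo hf_le)

lemma inv_le_of_lower_scaling {φ : ℝ → ℝ} {a δ r R : ℝ} (ha : 0 < a) (hr : 0 < r) (hR : 0 < R)
    (hφr : 0 < φ r) (h : a * (R / r) ^ δ ≤ φ R / φ r) :
    (φ R)⁻¹ ≤ a⁻¹ * (r / R) ^ δ * (φ r)⁻¹ := by
  have hpow : 0 < (R / r) ^ δ := by positivity
  have hφR : a * (R / r) ^ δ * φ r ≤ φ R := (le_div_iff₀ hφr).mp h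
  rw [← inv_div R r, Real.inv_rpow (div_pos hR hr).le, ← mul_inv, ← mul_inv]
  exact inv_anti₀ (by positivity) (by linarith)

lemma inv_mul_inv_phi_inv_sq_le {φ : ℝ → ℝ} {a δ lam r : ℝ} (ha : 0 < a) (hlam : 0 < lam)
    (hφlam : 0 < φ (lam ^ 2))
    (hscal : ∀ r R : ℝ, 0 < r → r < R → a * (R / r) ^ δ ≤ φ R / φ r)
    (hr : r ∈ Ioo 0 (1 / lam)) :
    r⁻¹ * (φ ((r ^ 2)⁻¹))⁻¹ ≤ a⁻¹ * lam ^ (2 * δ) * (φ (lam ^ 2))⁻¹ * r ^ (2 * δ - 1) := by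
  obtain ⟨hr0, hrlam⟩ := hr
  have hlamr : lam * r < 1 := by rwa [lt_div_iff₀ hlam, mul_comm] at hrlam
  have hlt : lam ^ 2 < (r ^ 2)⁻¹ := by
    rw [← one_div, lt_div_iff₀ (by positivity), ← mul_pow]
    exact pow_lt_one₀ (by positivity) hlamr two_ne_zero
  have key := inv_le_of_lower_scaling ha (by positivity) (by positivity) hφlam
    (hscal _ _ (by positivity) hlt)
  have hratio : (lam ^ 2 / (r ^ 2)⁻¹) ^ δ = lam ^ (2 * δ) * r ^ (2 * δ) := by
    rw [div_inv_eq_mul, ← mul_pow, ← Real.rpow_natCast, ← Real.rpow_mul (by positivity),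
      Real.mul_rpow hlam.le hr0.le]
    push_cast; ring_nf
  rw [hratio] at key
  rw [Real.rpow_sub hr0, Real.rpow_one]
  calc r⁻¹ * (φ ((r ^ 2)⁻¹))⁻¹
      ≤ r⁻¹ * (a⁻¹ * (lam ^ (2 * δ) * r ^ (2 * δ)) * (φ (lam ^ 2))⁻¹) := by gcongr
    _ = a⁻¹ * lam ^ (2 * δ) * (φ (lam ^ 2))⁻¹ * (r ^ (2 * δ) / r) := by ring

theorem integral_estimate_inverse_general
    (φ : ℝ → ℝ) (a₅ δ : ℝ)
    (ha₅ : 0 < a₅) (hδ0 : 0 < δ)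
    (hφpos : ∀ x > 0, 0 < φ x)
    (hscal : ∀ r R : ℝ, 0 < r → r < R → a₅ * (R / r) ^ δ ≤ φ R / φ r) :
    ∃ c > 0, ∀ lam > 0,
      (∫ r in Set.Ioc (0:ℝ) (1 / lam), r⁻¹ * (φ ((r ^ 2)⁻¹))⁻¹)
        ≤ c * (φ (lam ^ 2))⁻¹ := by
  refine ⟨a₅⁻¹ * (2 * δ)⁻¹, by positivity, fun lam hlam => ?_⟩
  calc (∫ r in Ioc (0:ℝ) (1 / lam), r⁻¹ * (φ ((r ^ 2)⁻¹))⁻¹)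
      ≤ a₅⁻¹ * lam ^ (2 * δ) * (φ (lam ^ 2))⁻¹ * ((1 / lam) ^ (2 * δ) / (2 * δ)) :=
        setIntegral_Ioc_le_of_le_mul_rpow (by positivity) (by positivity)
          (fun r ⟨hr0, _⟩ => by have := hφpos (r ^ 2)⁻¹ (by positivity); positivity)
          (fun r hr => inv_mul_inv_phi_inv_sq_le ha₅ hlam (hφpos _ (by positivity)) hscal hr)
    _ = a₅⁻¹ * (2 * δ)⁻¹ * (φ (lam ^ 2))⁻¹ := by
        rw [one_div, Real.inv_rpow hlam.le]
        field_simp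

/-- Karamata-type integral estimate (2.12). -/
theorem integral_estimate_inverse
    (φ : ℝ → ℝ) (a₅ δ : ℝ)
    (ha₅ : 0 < a₅) (hδ0 : 0 < δ) (hδ1 : δ < 1)
    (hφpos : ∀ x > 0, 0 < φ x)
    (hφmono : ∀ x y : ℝ, 0 < x → x ≤ y → φ x ≤ φ y)
    (hscal : ∀ r R : ℝ, 0 < r → r < R → a₅ * (R / r) ^ δ ≤ φ R / φ r) :
    ∃ c > 0, ∀ lam > 0,
      (∫ r in Set.Ioc (0:ℝ) (1 / lam), r⁻¹ * (φ ((r ^ 2)⁻¹))⁻¹)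
        ≤ c * (φ (lam ^ 2))⁻¹ :=
  integral_estimate_inverse_general φ a₅ δ ha₅ hδ0 hφpos hscal
end
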